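/- Let β ∈ (0,1). There exists a constant C, depending only on α, β, K, such that every smooth positive solution of the cross-diffusion system on [0,T] with potentials V, W ∈ C³(𝕋) whose C³ norms are at most K satisfies, for every t ∈ [0,T], −(d/dt) ∫_𝕋 S(t,x)^β dx + (αβ(1−β)/2) ∫_𝕋 S(t,x)^{α+β−3} (∂_x S(t,x))² dx ≤ C ∫_𝕋 S(t,x)^{β+1−α} dx, where S = ρ + μ. -/

import Mathlib

open MeasureTheory Real Set Filter

noncomputable section

/-- Partial derivative with respect to the time variable (first argument). -/
def pt (f : ℝ → ℝ → ℝ) (t x : ℝ) : ℝ := deriv (fun s => f s x) t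

/-- Partial derivative with respect to the space variable (second argument). -/
def px (f : ℝ → ℝ → ℝ) (t x : ℝ) : ℝ := deriv (fun y => f t y) x

/-- A smooth positive solution of the cross-diffusion system
`∂ₜρ = ∂ₓ(ρ·αS^(α-2)∂ₓS) + ∂ₓ(ρ∂ₓV)`, `∂ₜμ = ∂ₓ(μ·αS^(α-2)∂ₓS) + ∂ₓ(μ∂ₓW)` (S = ρ+μ)
on [0,T]×𝕋, where the torus 𝕋 = ℝ/ℤ is modeled by 1-periodic functions on ℝ. -/
structure CrossDiffSol (T α : ℝ) (V W : ℝ → ℝ) (ρ μ : ℝ → ℝ → ℝ) : Prop where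
  smooth_rho : ContDiff ℝ (⊤ : ℕ∞) (Function.uncurry ρ)
  smooth_mu : ContDiff ℝ (⊤ : ℕ∞) (Function.uncurry μ)
  periodic_rho : ∀ t, Function.Periodic (ρ t) 1
  periodic_mu : ∀ t, Function.Periodic (μ t) 1
  pos_rho : ∀ t x, 0 < ρ t x
  pos_mu : ∀ t x, 0 < μ t x
  smooth_V : ContDiff ℝ 3 V
  smooth_W : ContDiff ℝ 3 W
  periodic_V : Function.Periodic V 1
  periodic_W : Function.Periodic W 1
  eq_rho : ∀ t ∈ Set.Icc (0:ℝ) T, ∀ x : ℝ,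
    pt ρ t x =
      px (fun s y => ρ s y * (α * (ρ s y + μ s y) ^ (α - 2) *
        px (fun s' y' => ρ s' y' + μ s' y') s y)) t x
      + px (fun s y => ρ s y * deriv V y) t x
  eq_mu : ∀ t ∈ Set.Icc (0:ℝ) T, ∀ x : ℝ,
    pt μ t x =
      px (fun s y => μ s y * (α * (ρ s y + μ s y) ^ (α - 2) *
        px (fun s' y' => ρ s' y' + μ s' y') s y)) t x
      + px (fun s y => μ s y * deriv W y) t x

lemma periodic_deriv' {f : ℝ → ℝ} (h : Function.Periodic f 1) :
    Function.Periodic (deriv f) 1 := by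
  intro x
  have h2 : (fun y => f (y + 1)) = f := funext fun y => h y
  rw [← deriv_comp_add_const f 1, h2]

lemma hasDerivAt_slice1 {G : ℝ × ℝ → ℝ} (hG : Differentiable ℝ G) (t x : ℝ) :
    HasDerivAt (fun s => G (s, x)) (fderiv ℝ G (t, x) (1, 0)) t := by
  have h1 : HasDerivAt (fun s : ℝ => (s, x)) ((1 : ℝ), (0 : ℝ)) t :=
    (hasDerivAt_id t).prodMk (hasDerivAt_const t x)
  exact (hG (t, x)).hasFDerivAt.comp_hasDerivAt t h1

lemma hasDerivAt_integral_pow {S : ℝ → ℝ → ℝ} (hS : ContDiff ℝ (⊤ : ℕ∞) (Function.uncurry S))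
    (hpos : ∀ s y, 0 < S s y) (β : ℝ) (t : ℝ) :
    HasDerivAt (fun s => ∫ x in (0:ℝ)..1, S s x ^ β)
      (∫ x in (0:ℝ)..1, deriv (fun s => S s x ^ β) t) t := by
  set G : ℝ × ℝ → ℝ := fun p => Function.uncurry S p ^ β with hGdef
  have hG : ContDiff ℝ (⊤ : ℕ∞) G :=
    contDiff_iff_contDiffAt.mpr fun p =>
      hS.contDiffAt.rpow_const_of_ne (ne_of_gt (hpos p.1 p.2))
  have hGd : Differentiable ℝ G := hG.differentiable (by simp)
  set Φ : ℝ × ℝ → ℝ := fun p => fderiv ℝ G p (1, 0) with hΦdef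
  have hΦc : Continuous Φ := (hG.continuous_fderiv (by simp)).clm_apply continuous_const
  have hcomp : IsCompact (Icc (t - 1) (t + 1) ×ˢ Icc (0:ℝ) 1) :=
    isCompact_Icc.prod isCompact_Icc
  obtain ⟨M, hM⟩ := hcomp.exists_bound_of_continuousOn hΦc.continuousOn
  have key := intervalIntegral.hasDerivAt_integral_of_dominated_loc_of_deriv_le
    (F := fun s y => S s y ^ β) (F' := fun s y => Φ (s, y)) (x₀ := t)
    (bound := fun _ => M) (a := 0) (b := 1) (μ := volume) (s := Metric.ball t 1) (Metric.ball_mem_nhds t one_pos)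
    (Eventually.of_forall fun s =>
      ((hG.continuous.comp (continuous_const.prodMk continuous_id)).aestronglyMeasurable :
        AEStronglyMeasurable (fun y => S s y ^ β) _))
    ((hG.continuous.comp (continuous_const.prodMk continuous_id)).intervalIntegrable 0 1)
    ((hΦc.comp (continuous_const.prodMk continuous_id)).aestronglyMeasurable)
    (Eventually.of_forall fun y hy => by
      intro s hs
      apply hM (s, y)
      constructor
      · simp only [Metric.mem_ball, Real.dist_eq] at hs
        have := abs_lt.mp hs
        exact ⟨by linarith [this.1], by linarith [this.2]⟩
      · exact Ioc_subset_Icc_self (by simpa [uIoc_of_le (by norm_num : (0:ℝ) ≤ 1)] using hy))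
    (intervalIntegrable_const)
    (Eventually.of_forall fun y _ s _ => hasDerivAt_slice1 hGd s y)
  have h2 := key.2
  have hcongr : (∫ x in (0:ℝ)..1, deriv (fun s => S s x ^ β) t)
      = ∫ y in (0:ℝ)..1, Φ (t, y) :=
    intervalIntegral.integral_congr fun y _ => (hasDerivAt_slice1 hGd t y).deriv
  rw [hcongr]
  exact h2

lemma pointwise_young {α β K S P R : ℝ} (hα : 0 < α) (hβ : 0 < β) (hβ1 : β < 1)
    (hS : 0 < S) (hR : |R| ≤ K * S) :
    β * (β - 1) * S ^ (β - 2) * P * (α * S ^ (α - 1) * P + R)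
      + α * β * (1 - β) / 2 * (S ^ (α + β - 3) * P ^ 2)
      ≤ β * (1 - β) * K ^ 2 / (2 * α) * S ^ (β + 1 - α) := by
  have h1β : (0:ℝ) ≤ 1 - β := by linarith
  set a : ℝ := S ^ ((α + β - 3) / 2) * |P| with hadef
  set b : ℝ := S ^ ((β + 1 - α) / 2) with hbdef
  have ha : 0 ≤ a := mul_nonneg (rpow_pos_of_pos hS _).le (abs_nonneg _)
  have hb : 0 ≤ b := (rpow_pos_of_pos hS _).le
  have ha2 : a ^ 2 = S ^ (α + β - 3) * P ^ 2 := by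
    rw [hadef, mul_pow, ← Real.rpow_natCast (S ^ ((α + β - 3)/2)) 2,
      ← Real.rpow_mul hS.le, sq_abs]
    norm_num
  have hb2 : b ^ 2 = S ^ (β + 1 - α) := by
    rw [hbdef, ← Real.rpow_natCast (S ^ ((β + 1 - α)/2)) 2, ← Real.rpow_mul hS.le]
    norm_num
  have hab : a * b = S ^ (β - 1) * |P| := by
    rw [hadef, hbdef]
    rw [mul_right_comm, ← Real.rpow_add hS]
    ring_nf
  have hE1 : S ^ (β - 2) * S ^ (α - 1) = S ^ (α + β - 3) := by
    rw [← Real.rpow_add hS]; ring_nf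
  have hE2 : S ^ (β - 2) * S = S ^ (β - 1) := by
    nth_rewrite 2 [← Real.rpow_one S]
    rw [← Real.rpow_add hS]; ring_nf
  -- term 1 equality
  have hT1 : β * (β - 1) * S ^ (β - 2) * P * (α * S ^ (α - 1) * P)
      = -(α * β * (1 - β)) * a ^ 2 := by
    rw [ha2, ← hE1]; ring
  -- term 2 bound
  have hT2 : β * (β - 1) * S ^ (β - 2) * P * R ≤ β * (1 - β) * K * (a * b) := by
    have h1 : β * (β - 1) * S ^ (β - 2) * P * R
        ≤ |β * (β - 1) * S ^ (β - 2) * P * R| := le_abs_self _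
    have h2 : |β * (β - 1) * S ^ (β - 2) * P * R|
        = β * (1 - β) * S ^ (β - 2) * |P| * |R| := by
      rw [abs_mul, abs_mul, abs_mul, abs_mul, abs_of_pos hβ,
        abs_of_neg (by linarith : β - 1 < 0), abs_of_pos (rpow_pos_of_pos hS _)]
      ring
    have h3 : β * (1 - β) * S ^ (β - 2) * |P| * |R|
        ≤ β * (1 - β) * S ^ (β - 2) * |P| * (K * S) := by
      apply mul_le_mul_of_nonneg_left hR
      positivity
    have h4 : β * (1 - β) * S ^ (β - 2) * |P| * (K * S)
        = β * (1 - β) * K * (a * b) := by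
      rw [hab, ← hE2]; ring
    linarith
  have h2α : (0:ℝ) < 2 * α := by linarith
  have key : β * (1 - β) * K * (a * b)
      ≤ α * β * (1 - β) / 2 * a ^ 2 + β * (1 - β) * K ^ 2 / (2 * α) * b ^ 2 := by
    rw [← sub_nonneg]
    have hrw : α * β * (1 - β) / 2 * a ^ 2 + β * (1 - β) * K ^ 2 / (2 * α) * b ^ 2
        - β * (1 - β) * K * (a * b)
        = β * (1 - β) * (α * a - K * b) ^ 2 / (2 * α) := by
      field_simp
      ring
    rw [hrw]
    have : 0 ≤ β * (1 - β) * (α * a - K * b) ^ 2 :=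
      mul_nonneg (mul_nonneg hβ.le h1β) (sq_nonneg _)
    positivity
  calc β * (β - 1) * S ^ (β - 2) * P * (α * S ^ (α - 1) * P + R)
        + α * β * (1 - β) / 2 * (S ^ (α + β - 3) * P ^ 2)
      = (β * (β - 1) * S ^ (β - 2) * P * (α * S ^ (α - 1) * P)
          + β * (β - 1) * S ^ (β - 2) * P * R)
        + α * β * (1 - β) / 2 * (S ^ (α + β - 3) * P ^ 2) := by ring
    _ ≤ (-(α * β * (1 - β)) * a ^ 2 + β * (1 - β) * K * (a * b))
        + α * β * (1 - β) / 2 * a ^ 2 := by rw [hT1, ha2]; linarith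
    _ ≤ (-(α * β * (1 - β)) * a ^ 2
          + (α * β * (1 - β) / 2 * a ^ 2 + β * (1 - β) * K ^ 2 / (2 * α) * b ^ 2))
        + α * β * (1 - β) / 2 * a ^ 2 := by linarith
    _ = β * (1 - β) * K ^ 2 / (2 * α) * b ^ 2 := by ring
    _ = β * (1 - β) * K ^ 2 / (2 * α) * S ^ (β + 1 - α) := by rw [hb2]

/-- The key dissipation differential inequality: for `β ∈ (0,1)`,
`-(d/dt)∫ S^β + (αβ(1-β)/2)∫ S^(α+β-3)(∂ₓS)² ≤ C∫ S^(β+1-α)`,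
with a constant depending only on `α, β, K` (where `K` bounds the `C³` norms of `V, W`). -/
theorem dissipation_inequality (α β K : ℝ) (hα : 0 < α) (hα1 : α ≤ 1)
    (hβ : 0 < β) (hβ1 : β < 1) (hK : 0 < K) :
    ∃ C : ℝ, ∀ (T : ℝ) (V W : ℝ → ℝ) (ρ μ : ℝ → ℝ → ℝ), 0 < T →
      CrossDiffSol T α V W ρ μ →
      (∀ x : ℝ, |V x| ≤ K ∧ |deriv V x| ≤ K ∧ |deriv (deriv V) x| ≤ K ∧
        |deriv (deriv (deriv V)) x| ≤ K) →
      (∀ x : ℝ, |W x| ≤ K ∧ |deriv W x| ≤ K ∧ |deriv (deriv W) x| ≤ K ∧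
        |deriv (deriv (deriv W)) x| ≤ K) →
      ∀ t ∈ Set.Icc (0:ℝ) T,
        -(deriv (fun s => ∫ x in (0:ℝ)..1, (ρ s x + μ s x) ^ β) t)
          + α * β * (1 - β) / 2 * ∫ x in (0:ℝ)..1,
              (ρ t x + μ t x) ^ (α + β - 3) *
                (px (fun s y => ρ s y + μ s y) t x) ^ 2
          ≤ C * ∫ x in (0:ℝ)..1, (ρ t x + μ t x) ^ (β + 1 - α) := by
  refine ⟨β * (1 - β) * K ^ 2 / (2 * α), ?_⟩
  intro T V W ρ μ hT sol hV hW t ht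
  -- abbreviation
  set S : ℝ → ℝ → ℝ := fun s y => ρ s y + μ s y with hSdef
  have hSapp : ∀ s y, ρ s y + μ s y = S s y := fun _ _ => rfl
  simp only [hSapp, px]
  -- basic facts
  have hSsm : ContDiff ℝ (⊤ : ℕ∞) (Function.uncurry S) := sol.smooth_rho.add sol.smooth_mu
  have hSpos : ∀ s y, 0 < S s y := fun s y => add_pos (sol.pos_rho s y) (sol.pos_mu s y)
  have hSt : ContDiff ℝ (⊤ : ℕ∞) (fun y => S t y) := hSsm.comp (contDiff_const.prodMk contDiff_id)
  have hρt : ContDiff ℝ (⊤ : ℕ∞) (fun y => ρ t y) :=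
    sol.smooth_rho.comp (contDiff_const.prodMk contDiff_id)
  have hμt : ContDiff ℝ (⊤ : ℕ∞) (fun y => μ t y) :=
    sol.smooth_mu.comp (contDiff_const.prodMk contDiff_id)
  set P : ℝ → ℝ := deriv (fun y => S t y) with hPdef
  have hP : ContDiff ℝ 2 P := by
    have h' : ContDiff ℝ (2+1) (fun y => S t y) := hSt.of_le (by exact WithTop.coe_le_coe.mpr le_top)
    exact (contDiff_succ_iff_deriv.mp h').2.2
  have hV' : ContDiff ℝ 2 (deriv V) := by
    have h' : ContDiff ℝ (2+1) V := by exact_mod_cast sol.smooth_V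
    exact (contDiff_succ_iff_deriv.mp h').2.2
  have hW' : ContDiff ℝ 2 (deriv W) := by
    have h' : ContDiff ℝ (2+1) W := by exact_mod_cast sol.smooth_W
    exact (contDiff_succ_iff_deriv.mp h').2.2
  have hStd : ∀ x, HasDerivAt (fun y => S t y) (P x) x :=
    fun x => ((hSt.differentiable (by simp)) x).hasDerivAt
  -- G function
  set R : ℝ → ℝ := fun y => ρ t y * deriv V y + μ t y * deriv W y with hRdef
  set Gf : ℝ → ℝ := fun y => α * S t y ^ (α - 1) * P y + R y with hGfdef
  -- differentiability pieces
  have hrpow : ∀ (c : ℝ), ContDiff ℝ (⊤ : ℕ∞) (fun y => S t y ^ c) := fun c =>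
    contDiff_iff_contDiffAt.mpr fun y =>
      hSt.contDiffAt.rpow_const_of_ne (hSpos t y).ne'
  have hd1 : ∀ x, DifferentiableAt ℝ (fun y => ρ t y * (α * S t y ^ (α - 2) * P y)) x :=
    fun x => ((hρt.differentiable (by simp)) x).mul
      ((((hrpow (α-2)).differentiable (by simp) x).const_mul α).mul
        ((hP.differentiable (by norm_num)) x))
  have hd3 : ∀ x, DifferentiableAt ℝ (fun y => μ t y * (α * S t y ^ (α - 2) * P y)) x :=
    fun x => ((hμt.differentiable (by simp)) x).mul
      ((((hrpow (α-2)).differentiable (by simp) x).const_mul α).mul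
        ((hP.differentiable (by norm_num)) x))
  have hd2 : ∀ x, DifferentiableAt ℝ (fun y => ρ t y * deriv V y) x :=
    fun x => ((hρt.differentiable (by simp)) x).mul ((hV'.differentiable (by norm_num)) x)
  have hd4 : ∀ x, DifferentiableAt ℝ (fun y => μ t y * deriv W y) x :=
    fun x => ((hμt.differentiable (by simp)) x).mul ((hW'.differentiable (by norm_num)) x)
  -- the PDE for S: pt S t x = deriv Gf x
  have hptSx : ∀ x, deriv (fun s => S s x) t = deriv Gf x := by
    intro x
    have hA : deriv (fun s => S s x) t
        = deriv (fun s => ρ s x) t + deriv (fun s => μ s x) t := by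
      exact deriv_add
        (((sol.smooth_rho.comp (contDiff_id.prodMk contDiff_const)).differentiable (by simp)) t)
        (((sol.smooth_mu.comp (contDiff_id.prodMk contDiff_const)).differentiable (by simp)) t)
    have hB := sol.eq_rho t ht x
    have hC := sol.eq_mu t ht x
    simp only [pt, px] at hB hC
    rw [hA, hB, hC]
    have hsplit : deriv (fun y => (ρ t y * (α * S t y ^ (α - 2) * P y)
          + ρ t y * deriv V y) + (μ t y * (α * S t y ^ (α - 2) * P y)
          + μ t y * deriv W y)) x
        = (deriv (fun y => ρ t y * (α * S t y ^ (α - 2) * P y)) x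
            + deriv (fun y => ρ t y * deriv V y) x)
          + (deriv (fun y => μ t y * (α * S t y ^ (α - 2) * P y)) x
            + deriv (fun y => μ t y * deriv W y) x) := by
      rw [deriv_fun_add ((hd1 x).fun_add (hd2 x)) ((hd3 x).fun_add (hd4 x)),
        deriv_fun_add (hd1 x) (hd2 x), deriv_fun_add (hd3 x) (hd4 x)]
    have hfun : (fun y => (ρ t y * (α * S t y ^ (α - 2) * P y)
          + ρ t y * deriv V y) + (μ t y * (α * S t y ^ (α - 2) * P y)
          + μ t y * deriv W y)) = Gf := by
      funext y
      have he : S t y ^ (α - 1) = S t y ^ (α - 2) * S t y := by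
        have h1 : α - 1 = (α - 2) + 1 := by ring
        rw [h1, Real.rpow_add_one (hSpos t y).ne']
      simp only [hGfdef, hRdef, he]
      simp only [hSdef]
      ring
    rw [← hfun]
    exact hsplit.symm
  -- derivative of the integral
  have hDint := hasDerivAt_integral_pow hSsm hSpos β t
  have hrpowH : ∀ x, HasDerivAt (fun s => S s x ^ β)
      (deriv Gf x * β * S t x ^ (β - 1)) t := by
    intro x
    have h0 : HasDerivAt (fun s => S s x) (deriv Gf x) t := by
      have hds : Differentiable ℝ (fun s : ℝ => S s x) :=
        (hSsm.comp (contDiff_id.prodMk contDiff_const)).differentiable (by simp)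
      have h1 := (hds t).hasDerivAt
      rwa [show deriv (fun s => S s x) t = deriv Gf x from hptSx x] at h1
    exact h0.rpow_const (Or.inl (hSpos t x).ne')
  -- u and u'
  set u : ℝ → ℝ := fun y => β * S t y ^ (β - 1) with hudef
  set u' : ℝ → ℝ := fun y => β * (P y * (β - 1) * S t y ^ (β - 1 - 1)) with hu'def
  have huH : ∀ x, HasDerivAt u (u' x) x :=
    fun x => ((hStd x).rpow_const (Or.inl (hSpos t x).ne')).const_mul β
  -- Gf is C¹
  have hGf1 : ContDiff ℝ 1 Gf := by
    apply ContDiff.add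
    · exact (contDiff_const.mul ((hrpow (α-1)).of_le (by simp))).mul (hP.of_le (by norm_num))
    · exact ((hρt.of_le (by simp)).mul (hV'.of_le (by norm_num))).add
        ((hμt.of_le (by simp)).mul (hW'.of_le (by norm_num)))
  have hGfd : ∀ x, DifferentiableAt ℝ Gf x :=
    fun x => (hGf1.differentiable (by simp)) x
  have hGfderivcont : Continuous (deriv Gf) := hGf1.continuous_deriv le_rfl
  -- integration by parts
  have hIBP : ∫ x in (0:ℝ)..1, u x * deriv Gf x
      = u 1 * Gf 1 - u 0 * Gf 0 - ∫ x in (0:ℝ)..1, u' x * Gf x := by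
    apply intervalIntegral.integral_mul_deriv_eq_deriv_mul_of_hasDerivAt
    · exact ((continuous_const.mul ((hrpow (β-1)).continuous)).continuousOn)
    · exact hGf1.continuous.continuousOn
    · exact fun x _ => huH x
    · exact fun x _ => (hGfd x).hasDerivAt
    · exact (continuous_const.mul (((hP.continuous.mul continuous_const)).mul
        ((hrpow (β-1-1)).continuous))).intervalIntegrable 0 1
    · exact hGfderivcont.intervalIntegrable 0 1
  -- periodicity / boundary terms
  have hStper : Function.Periodic (fun y => S t y) 1 := fun y => by
    simp only [hSdef]
    rw [sol.periodic_rho t y, sol.periodic_mu t y]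
  have hPper : Function.Periodic P 1 := periodic_deriv' hStper
  have hbd : u 1 * Gf 1 - u 0 * Gf 0 = 0 := by
    have h1 : S t 1 = S t 0 := by have := hStper 0; simpa using this
    have h2 : P 1 = P 0 := by have := hPper 0; simpa using this
    have h3 : deriv V 1 = deriv V 0 := by
      have := periodic_deriv' sol.periodic_V 0; simpa using this
    have h4 : deriv W 1 = deriv W 0 := by
      have := periodic_deriv' sol.periodic_W 0; simpa using this
    have h5 : ρ t 1 = ρ t 0 := by have := sol.periodic_rho t 0; simpa using this
    have h6 : μ t 1 = μ t 0 := by have := sol.periodic_mu t 0; simpa using this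
    simp only [hudef, hGfdef, hRdef, h1, h2, h3, h4, h5, h6]
    ring
  -- the derivative identity
  have hderiv_eq : deriv (fun s => ∫ x in (0:ℝ)..1, S s x ^ β) t
      = -∫ x in (0:ℝ)..1, u' x * Gf x := by
    rw [hDint.deriv]
    have e1 : (∫ x in (0:ℝ)..1, deriv (fun s => S s x ^ β) t)
        = ∫ x in (0:ℝ)..1, u x * deriv Gf x := by
      apply intervalIntegral.integral_congr
      intro x _
      show deriv (fun s => S s x ^ β) t = u x * deriv Gf x
      rw [(hrpowH x).deriv]
      simp only [hudef]
      ring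
    rw [e1, hIBP, hbd, zero_sub]
  rw [hderiv_eq, neg_neg]
  -- integrability
  have hcont1 : Continuous (fun x => u' x * Gf x) :=
    (continuous_const.mul (((hP.continuous.mul continuous_const)).mul
      ((hrpow (β-1-1)).continuous))).mul hGf1.continuous
  have hcont2 : Continuous (fun x => S t x ^ (α + β - 3) * P x ^ 2) :=
    ((hrpow (α+β-3)).continuous).mul (hP.continuous.pow 2)
  have hcont3 : Continuous (fun x => S t x ^ (β + 1 - α)) := (hrpow (β+1-α)).continuous
  have hint1 := hcont1.intervalIntegrable (μ := volume) 0 1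
  have hint2 := hcont2.intervalIntegrable (μ := volume) 0 1
  have hint3 := hcont3.intervalIntegrable (μ := volume) 0 1
  -- final inequality
  calc (∫ x in (0:ℝ)..1, u' x * Gf x)
        + α * β * (1 - β) / 2 * ∫ x in (0:ℝ)..1, S t x ^ (α + β - 3) * P x ^ 2
      = ∫ x in (0:ℝ)..1,
          (u' x * Gf x + α * β * (1 - β) / 2 * (S t x ^ (α + β - 3) * P x ^ 2)) := by
        rw [intervalIntegral.integral_add hint1 (hint2.const_mul _),
          intervalIntegral.integral_const_mul]
    _ ≤ ∫ x in (0:ℝ)..1, β * (1 - β) * K ^ 2 / (2 * α) * S t x ^ (β + 1 - α) := by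
        apply intervalIntegral.integral_mono_on (by norm_num)
          (hint1.add (hint2.const_mul _)) (hint3.const_mul _)
        intro x _
        show u' x * Gf x + α * β * (1 - β) / 2 * (S t x ^ (α + β - 3) * P x ^ 2)
          ≤ β * (1 - β) * K ^ 2 / (2 * α) * S t x ^ (β + 1 - α)
        have hRb : |R x| ≤ K * S t x := by
          have h1 : |ρ t x * deriv V x + μ t x * deriv W x|
              ≤ |ρ t x * deriv V x| + |μ t x * deriv W x| := abs_add_le _ _
          rw [abs_mul, abs_mul, abs_of_pos (sol.pos_rho t x), abs_of_pos (sol.pos_mu t x)] at h1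
          have h2 : ρ t x * |deriv V x| ≤ ρ t x * K :=
            mul_le_mul_of_nonneg_left (hV x).2.1 (sol.pos_rho t x).le
          have h3 : μ t x * |deriv W x| ≤ μ t x * K :=
            mul_le_mul_of_nonneg_left (hW x).2.1 (sol.pos_mu t x).le
          have h4 : K * S t x = ρ t x * K + μ t x * K := by
            simp only [hSdef]; ring
          simp only [hRdef]
          rw [h4]
          linarith
        have hy := pointwise_young (P := P x) (R := R x) hα hβ hβ1 (hSpos t x) hRb
        have he : β - 1 - 1 = β - 2 := by ring
        have hform : u' x * Gf x
            = β * (β - 1) * S t x ^ (β - 2) * P x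
              * (α * S t x ^ (α - 1) * P x + R x) := by
          simp only [hu'def, hGfdef, he]
          ring
        rw [hform]
        exact hy
    _ = β * (1 - β) * K ^ 2 / (2 * α) * ∫ x in (0:ℝ)..1, S t x ^ (β + 1 - α) := by
        rw [intervalIntegral.integral_const_mul]
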